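/- arXiv:1310.8390 — 2 statements merged into one kernel-verified Lean document; each statement's English description precedes it below -/
import Mathlib

section
/- (Existence of a principal eigenfunction) Let Q : X → ℝ and assume λ := λ₁(X, −Δ+Q) > 0. Then there exists a function u : X → ℝ with u(x) > 0 for all x ∈ X such that (−Δ + Q)u = λ u on all of X. -/
/-!
On each finite ball `B_j` around a base point, `λ₁(B_j)` is the minimum of the Rayleigh
quotient over a compact sphere. Replacing a minimizer `u` by `|u|` does not increase the energy,
so there is a nonnegative minimizer, and its first variation is the eigenvalue equation on `B_j`.
A Harnack inequality along edges, `u x ≤ (1 + |Q y|) d_y / μ_{yx} · u y` for `y ∼ x` and a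
nonnegative solution of `(-Δ+Q)u = λu` with `λ ≥ 0`, shows that these eigenfunctions do not
vanish at the base point and, once normalized there, are bounded above and away from zero at
each vertex uniformly in `j`. Since `λ₁(B_j)` decreases to `λ₁(X)`, a pointwise limit of the
normalized eigenfunctions is a positive solution of `(-Δ+Q)u = λ₁(X)u` on `X`.
-/

open Finset Filter

noncomputable section

variable {V : Type*}

/-- The (weighted) degree `d_x = ∑_{(x,y) ∈ E} μ_{xy}` of a vertex `x` in a locally
finite graph `G` with edge weights `μ`. -/
def deg (G : SimpleGraph V) [G.LocallyFinite] (μ : V → V → ℝ) (x : V) : ℝ :=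
  ∑ y ∈ G.neighborFinset x, μ x y

/-- The graph Laplacian `(Δu)(x) = ∑_{(x,y) ∈ E} (μ_{xy}/d_x) (u(y) - u(x))`. -/
def lap (G : SimpleGraph V) [G.LocallyFinite] (μ : V → V → ℝ) (u : V → ℝ) (x : V) : ℝ :=
  ∑ y ∈ G.neighborFinset x, μ x y / deg G μ x * (u y - u x)

/-- The squared gradient `|∇u|²(x) = ∑_{(x,y) ∈ E} (μ_{xy}/d_x) (u(y) - u(x))²`. -/
def gradSq (G : SimpleGraph V) [G.LocallyFinite] (μ : V → V → ℝ) (u : V → ℝ) (x : V) : ℝ :=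
  ∑ y ∈ G.neighborFinset x, μ x y / deg G μ x * (u y - u x) ^ 2

/-- `d̂_x = sup_{(x,y) ∈ E} d_x / μ_{xy}`. -/
def dhat (G : SimpleGraph V) [G.LocallyFinite] (μ : V → V → ℝ) (x : V) : ℝ :=
  sSup {r : ℝ | ∃ y, G.Adj x y ∧ r = deg G μ x / μ x y}

/-- The principal (Dirichlet) eigenvalue `λ₁(D, -Δ+Q)` of a finite subset `D ⊆ X`:
the infimum of the Rayleigh quotients `(∫_D (-Δu + Qu)·u) / (∫_D u²)` over test
functions `u` not identically zero on `D` and vanishing outside `D`, where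
`∫_S f = ∑_{x ∈ S} f(x) d_x`. -/
def lambda1 (G : SimpleGraph V) [G.LocallyFinite] (μ : V → V → ℝ) (Q : V → ℝ)
    (D : Finset V) : ℝ :=
  sInf {r : ℝ | ∃ u : V → ℝ, (∃ x ∈ D, u x ≠ 0) ∧ (∀ x, x ∉ D → u x = 0) ∧
    r = (∑ x ∈ D, (-lap G μ u x + Q x * u x) * u x * deg G μ x) /
        (∑ x ∈ D, (u x) ^ 2 * deg G μ x)}

/-- `λ₁(X, -Δ+Q)`: the limit of `λ₁(D_j, -Δ+Q)` along any exhaustion of `X` by finite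
subsets; by monotonicity this equals the infimum of `λ₁(D, -Δ+Q)` over all nonempty
finite subsets `D` of `X`. -/
def lambda1Top (G : SimpleGraph V) [G.LocallyFinite] (μ : V → V → ℝ) (Q : V → ℝ) : ℝ :=
  sInf {r : ℝ | ∃ D : Finset V, D.Nonempty ∧ r = lambda1 G μ Q D}

/-- `H` is the Dirichlet Green function of the ball `B(j) = {x | d(x,x₀) < j}`:
it is nonnegative, and for every `y ∈ B(j)` one has `Δ_x H(x,y) = -δ_y(x)` for
`x ∈ B(j)` and `H(x,y) = 0` for `x ∉ B(j)`. -/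
def IsDirichletGreenOnBall (G : SimpleGraph V) [G.LocallyFinite] [DecidableEq V]
    (μ : V → V → ℝ) (x₀ : V) (j : ℕ) (H : V → V → ℝ) : Prop :=
  (∀ x y, 0 ≤ H x y) ∧
  ∀ y, G.dist y x₀ < j →
    (∀ x, G.dist x x₀ < j → lap G μ (fun z => H z y) x = -(if x = y then 1 else 0)) ∧
    (∀ x, ¬ G.dist x x₀ < j → H x y = 0)

open Topology

section Laplacian

variable {G : SimpleGraph V} [G.LocallyFinite] {μ : V → V → ℝ} {Q : V → ℝ}

theorem lap_add (u v : V → ℝ) (x : V) : lap G μ (u + v) x = lap G μ u x + lap G μ v x := by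
  simp only [lap, Pi.add_apply, ← sum_add_distrib]
  exact sum_congr rfl fun _ _ => by ring

theorem lap_smul (c : ℝ) (u : V → ℝ) (x : V) : lap G μ (c • u) x = c * lap G μ u x := by
  simp only [lap, Pi.smul_apply, smul_eq_mul, mul_sum]
  exact sum_congr rfl fun _ _ => by ring

@[fun_prop]
theorem continuous_lap (x : V) : Continuous fun u : V → ℝ => lap G μ u x := by
  unfold lap
  fun_prop

theorem neg_lap_mul_deg {x : V} (hx : deg G μ x ≠ 0) (u : V → ℝ) :
    -lap G μ u x * deg G μ x = deg G μ x * u x - ∑ y ∈ G.neighborFinset x, μ x y * u y := by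
  have hterm : ∀ y ∈ G.neighborFinset x,
      -(μ x y / deg G μ x * (u y - u x)) * deg G μ x = μ x y * u x - μ x y * u y :=
    fun y _ => by field_simp; ring
  rw [lap, ← sum_neg_distrib, sum_mul, sum_congr rfl hterm, sum_sub_distrib, ← sum_mul]
  rfl

theorem deg_pos (hpos : ∀ x y, G.Adj x y → 0 < μ x y) {x y : V} (hxy : G.Adj x y) :
    0 < deg G μ x :=
  sum_pos' (fun z hz => (hpos x z ((G.mem_neighborFinset _ _).1 hz)).le)
    ⟨y, (G.mem_neighborFinset _ _).2 hxy, hpos x y hxy⟩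

theorem le_mul_of_adj_of_eigen (hpos : ∀ x y, G.Adj x y → 0 < μ x y) {u : V → ℝ} {lam : ℝ}
    {x y : V} (hu : 0 ≤ u) (hlam : 0 ≤ lam) (hyx : G.Adj y x)
    (heq : -lap G μ u y + Q y * u y = lam * u y) :
    u x ≤ (1 + |Q y|) * deg G μ y / μ y x * u y := by
  have hdy := deg_pos hpos hyx
  have hsum : μ y x * u x ≤ ∑ z ∈ G.neighborFinset y, μ y z * u z :=
    single_le_sum (f := fun z => μ y z * u z)
      (fun z hz => mul_nonneg (hpos y z ((G.mem_neighborFinset _ _).1 hz)).le (hu z))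
      ((G.mem_neighborFinset _ _).2 hyx)
  have hmean : ∑ z ∈ G.neighborFinset y, μ y z * u z = (1 + Q y - lam) * deg G μ y * u y := by
    linear_combination (-deg G μ y) * heq + neg_lap_mul_deg hdy.ne' u
  have hcoef : (1 + Q y - lam) * deg G μ y * u y ≤ (1 + |Q y|) * deg G μ y * u y := by
    gcongr
    · exact hu y
    · linarith [le_abs_self (Q y)]
  rw [div_mul_eq_mul_div, le_div_iff₀ (hpos y x hyx)]
  linarith

end Laplacian

section EnergyForm

variable (G : SimpleGraph V) [G.LocallyFinite] (μ : V → V → ℝ) (Q : V → ℝ) (D : Finset V)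

def energyForm (u v : V → ℝ) : ℝ :=
  ∑ x ∈ D, (-lap G μ u x + Q x * u x) * v x * deg G μ x

def sqNorm (u : V → ℝ) : ℝ :=
  ∑ x ∈ D, u x ^ 2 * deg G μ x

theorem lambda1_eq_sInf : lambda1 G μ Q D = sInf {r : ℝ | ∃ u : V → ℝ, (∃ x ∈ D, u x ≠ 0) ∧
    (∀ x, x ∉ D → u x = 0) ∧ r = energyForm G μ Q D u u / sqNorm G μ D u} :=
  rfl

variable {G μ Q D}

theorem energyForm_eq [DecidableEq V] (hd : ∀ x, 0 < deg G μ x) {u : V → ℝ}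
    (hu : ∀ x, x ∉ D → u x = 0) (v : V → ℝ) :
    energyForm G μ Q D u v = ∑ x ∈ D, (1 + Q x) * deg G μ x * u x * v x
      - ∑ x ∈ D, ∑ y ∈ G.neighborFinset x ∩ D, μ x y * u y * v x := by
  rw [energyForm, ← sum_sub_distrib]
  refine sum_congr rfl fun x _ => ?_
  have hnbr : ∑ y ∈ G.neighborFinset x, μ x y * u y
      = ∑ y ∈ G.neighborFinset x ∩ D, μ x y * u y :=
    (sum_subset inter_subset_left fun y hy hyD => by
      rw [hu y fun h => hyD (mem_inter.2 ⟨hy, h⟩), mul_zero]).symm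
  rw [← sum_mul, ← hnbr]
  linear_combination v x * neg_lap_mul_deg (hd x).ne' u

theorem energyForm_comm [DecidableEq V] (hsymm : ∀ x y, μ x y = μ y x) (hd : ∀ x, 0 < deg G μ x)
    {u v : V → ℝ} (hu : ∀ x, x ∉ D → u x = 0) (hv : ∀ x, x ∉ D → v x = 0) :
    energyForm G μ Q D u v = energyForm G μ Q D v u := by
  rw [energyForm_eq hd hu, energyForm_eq hd hv]
  congr 1
  · exact sum_congr rfl fun x _ => by ring
  · rw [sum_comm' fun x y => ?_]
    · refine sum_congr rfl fun y _ => sum_congr rfl fun x _ => ?_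
      rw [hsymm]
      ring
    · simp only [mem_inter, SimpleGraph.mem_neighborFinset, G.adj_comm x y]
      tauto

theorem energyForm_abs_le [DecidableEq V] (hpos : ∀ x y, G.Adj x y → 0 < μ x y)
    (hd : ∀ x, 0 < deg G μ x) {u : V → ℝ} (hu : ∀ x, x ∉ D → u x = 0) :
    energyForm G μ Q D |u| |u| ≤ energyForm G μ Q D u u := by
  have habs : ∀ x, x ∉ D → |u| x = 0 := fun x hx => by simp [hu x hx]
  rw [energyForm_eq hd hu, energyForm_eq hd habs]
  refine sub_le_sub (le_of_eq (sum_congr rfl fun x _ => ?_))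
    (sum_le_sum fun x _ => sum_le_sum fun y hy => ?_)
  · simp only [Pi.abs_apply, mul_assoc, abs_mul_abs_self]
  · have hμ := (hpos x y ((G.mem_neighborFinset _ _).1 (mem_inter.1 hy).1)).le
    simp only [Pi.abs_apply, mul_assoc, ← abs_mul]
    exact mul_le_mul_of_nonneg_left (le_abs_self _) hμ

theorem energyForm_add_smul (u v : V → ℝ) (t : ℝ) :
    energyForm G μ Q D (u + t • v) (u + t • v) = energyForm G μ Q D u u
      + t * (energyForm G μ Q D u v + energyForm G μ Q D v u)
      + t ^ 2 * energyForm G μ Q D v v := by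
  simp only [energyForm, lap_add, lap_smul, Pi.add_apply, Pi.smul_apply, smul_eq_mul, mul_sum,
    ← sum_add_distrib]
  exact sum_congr rfl fun x _ => by ring

theorem energyForm_smul (c : ℝ) (u : V → ℝ) :
    energyForm G μ Q D (c • u) (c • u) = c ^ 2 * energyForm G μ Q D u u := by
  simp only [energyForm, lap_smul, Pi.smul_apply, smul_eq_mul, mul_sum]
  exact sum_congr rfl fun x _ => by ring

theorem sqNorm_smul (c : ℝ) (u : V → ℝ) : sqNorm G μ D (c • u) = c ^ 2 * sqNorm G μ D u := by
  simp only [sqNorm, Pi.smul_apply, smul_eq_mul, mul_sum]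
  exact sum_congr rfl fun x _ => by ring

end EnergyForm

section Variational

variable {G : SimpleGraph V} [G.LocallyFinite] {μ : V → V → ℝ} {Q : V → ℝ} {D : Finset V}

theorem sqNorm_nonneg (hd : ∀ x, 0 < deg G μ x) (u : V → ℝ) : 0 ≤ sqNorm G μ D u :=
  sum_nonneg fun x _ => mul_nonneg (sq_nonneg _) (hd x).le

theorem sqNorm_pos (hd : ∀ x, 0 < deg G μ x) {u : V → ℝ} (hu : ∃ x ∈ D, u x ≠ 0) :
    0 < sqNorm G μ D u := by
  obtain ⟨x, hx, hux⟩ := hu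
  exact sum_pos' (fun y _ => mul_nonneg (sq_nonneg _) (hd y).le)
    ⟨x, hx, mul_pos (by positivity) (hd x)⟩

theorem exists_ne_zero_of_sqNorm_ne_zero {u : V → ℝ} (hu : sqNorm G μ D u ≠ 0) :
    ∃ x ∈ D, u x ≠ 0 := by
  by_contra! h
  exact hu (sum_eq_zero fun x hx => by simp [h x hx])

theorem isCompact_sqNorm_eq_one (hd : ∀ x, 0 < deg G μ x) :
    IsCompact {u : V → ℝ | (∀ x, x ∉ D → u x = 0) ∧ sqNorm G μ D u = 1} := by
  have hsupp : IsClosed {u : V → ℝ | ∀ x, x ∉ D → u x = 0} := by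
    rw [Set.ofPred_forall]
    refine isClosed_iInter fun x => ?_
    by_cases hx : x ∈ D
    · simp [hx]
    · simpa [hx] using isClosed_eq (continuous_apply x) continuous_const
  have hclosed : IsClosed {u : V → ℝ | (∀ x, x ∉ D → u x = 0) ∧ sqNorm G μ D u = 1} :=
    hsupp.inter (isClosed_eq (by unfold sqNorm; fun_prop) continuous_const)
  refine (isCompact_univ_pi fun x => isCompact_Icc (a := -(1 + (deg G μ x)⁻¹))
    (b := 1 + (deg G μ x)⁻¹)).of_isClosed_subset hclosed fun u ⟨hsupp, hu⟩ x _ => ?_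
  have hdinv := inv_pos.2 (hd x)
  refine abs_le_of_sq_le_sq' ?_ (by positivity)
  by_cases hx : x ∈ D
  · have hle : u x ^ 2 * deg G μ x ≤ 1 :=
      hu ▸ single_le_sum (f := fun y => u y ^ 2 * deg G μ y)
        (fun y _ => mul_nonneg (sq_nonneg _) (hd y).le) hx
    have : u x ^ 2 ≤ (deg G μ x)⁻¹ := by rwa [← one_div, le_div_iff₀ (hd x)]
    nlinarith
  · rw [hsupp x hx, zero_pow two_ne_zero]
    positivity

theorem energyForm_mul_sqNorm_le_of_isMinOn (hd : ∀ x, 0 < deg G μ x) {u₀ : V → ℝ}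
    (hmin : IsMinOn (fun u => energyForm G μ Q D u u)
      {u : V → ℝ | (∀ x, x ∉ D → u x = 0) ∧ sqNorm G μ D u = 1} u₀)
    {u : V → ℝ} (hu : ∀ x, x ∉ D → u x = 0) :
    energyForm G μ Q D u₀ u₀ * sqNorm G μ D u ≤ energyForm G μ Q D u u := by
  rcases (sqNorm_nonneg hd u).eq_or_lt with h0 | hs
  · have hzero : ∀ x ∈ D, u x = 0 := fun x hx =>
      by_contra fun h => (sqNorm_pos hd ⟨x, hx, h⟩).ne' h0.symm
    rw [← h0, mul_zero]
    exact (sum_eq_zero fun x hx => by rw [hzero x hx]; ring).ge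
  · set c := (√(sqNorm G μ D u))⁻¹
    have hc : c ^ 2 * sqNorm G μ D u = 1 := by
      rw [inv_pow, Real.sq_sqrt hs.le, inv_mul_cancel₀ hs.ne']
    have hmem : c • u ∈ {u : V → ℝ | (∀ x, x ∉ D → u x = 0) ∧ sqNorm G μ D u = 1} :=
      ⟨fun x hx => by rw [Pi.smul_apply, hu x hx, smul_zero], by rw [sqNorm_smul, hc]⟩
    have hcu : energyForm G μ Q D u₀ u₀ ≤ energyForm G μ Q D (c • u) (c • u) := hmin hmem
    rw [energyForm_smul] at hcu
    calc _ ≤ c ^ 2 * energyForm G μ Q D u u * sqNorm G μ D u :=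
          mul_le_mul_of_nonneg_right hcu hs.le
      _ = _ := by linear_combination energyForm G μ Q D u u * hc

theorem lambda1_eq_of_forall_le (hd : ∀ x, 0 < deg G μ x) {u₀ : V → ℝ}
    (hsupp : ∀ x, x ∉ D → u₀ x = 0) (hs : sqNorm G μ D u₀ = 1)
    (hle : ∀ u : V → ℝ, (∀ x, x ∉ D → u x = 0) →
      energyForm G μ Q D u₀ u₀ * sqNorm G μ D u ≤ energyForm G μ Q D u u) :
    lambda1 G μ Q D = energyForm G μ Q D u₀ u₀ := by
  rw [lambda1_eq_sInf]
  refine IsLeast.csInf_eq ⟨⟨u₀, exists_ne_zero_of_sqNorm_ne_zero (hs ▸ one_ne_zero), hsupp,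
    by rw [hs, div_one]⟩, ?_⟩
  rintro r ⟨u, hne, hu, rfl⟩
  rw [le_div_iff₀ (sqNorm_pos hd hne)]
  exact hle u hu

theorem exists_lambda1_minimizer (hd : ∀ x, 0 < deg G μ x) (hD : D.Nonempty) :
    ∃ u₀ : V → ℝ, (∀ x, x ∉ D → u₀ x = 0) ∧ sqNorm G μ D u₀ = 1 ∧
      energyForm G μ Q D u₀ u₀ = lambda1 G μ Q D ∧
      ∀ u : V → ℝ, (∀ x, x ∉ D → u x = 0) →
        lambda1 G μ Q D * sqNorm G μ D u ≤ energyForm G μ Q D u u := by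
  classical
  obtain ⟨z, hz⟩ := hD
  have hzpos : 0 < sqNorm G μ D (Pi.single z 1) :=
    sqNorm_pos hd ⟨z, hz, by simp⟩
  have hK : (√(sqNorm G μ D (Pi.single z 1)))⁻¹ • Pi.single z (1 : ℝ) ∈
      {u : V → ℝ | (∀ x, x ∉ D → u x = 0) ∧ sqNorm G μ D u = 1} := by
    refine ⟨fun x hx => by simp [Pi.single_eq_of_ne (ne_of_mem_of_not_mem hz hx).symm], ?_⟩
    rw [sqNorm_smul, inv_pow, Real.sq_sqrt hzpos.le, inv_mul_cancel₀ hzpos.ne']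
  obtain ⟨u₀, ⟨hsupp, hs⟩, hmin⟩ := (isCompact_sqNorm_eq_one hd).exists_isMinOn ⟨_, hK⟩
    (by unfold energyForm; fun_prop : Continuous fun u => energyForm G μ Q D u u).continuousOn
  have hle := fun u => energyForm_mul_sqNorm_le_of_isMinOn hd hmin (u := u)
  have hlam := lambda1_eq_of_forall_le hd hsupp hs hle
  exact ⟨u₀, hsupp, hs, hlam.symm, hlam ▸ hle⟩

theorem lambda1_antitone (hd : ∀ x, 0 < deg G μ x) {D' : Finset V} (hD : D.Nonempty)
    (h : D ⊆ D') : lambda1 G μ Q D' ≤ lambda1 G μ Q D := by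
  obtain ⟨u₀, hsupp, hs, hE, -⟩ := exists_lambda1_minimizer (Q := Q) hd hD
  obtain ⟨-, -, -, -, hle⟩ := exists_lambda1_minimizer (Q := Q) hd (hD.mono h)
  have hs' : sqNorm G μ D' u₀ = sqNorm G μ D u₀ :=
    (sum_subset h fun x _ hx => by simp [hsupp x hx]).symm
  have hE' : energyForm G μ Q D' u₀ u₀ = energyForm G μ Q D u₀ u₀ :=
    (sum_subset h fun x _ hx => by simp [hsupp x hx]).symm
  simpa [hs', hE', hs, hE] using hle u₀ fun x hx => hsupp x fun hxD => hx (h hxD)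

theorem eigen_eq_of_minimizer [DecidableEq V] (hsymm : ∀ x y, μ x y = μ y x)
    (hd : ∀ x, 0 < deg G μ x) {lam : ℝ} {w : V → ℝ} (hw : ∀ x, x ∉ D → w x = 0)
    (hle : ∀ u : V → ℝ, (∀ x, x ∉ D → u x = 0) →
      lam * sqNorm G μ D u ≤ energyForm G μ Q D u u)
    (hweq : energyForm G μ Q D w w = lam * sqNorm G μ D w) {z : V} (hz : z ∈ D) :
    -lap G μ w z + Q z * w z = lam * w z := by
  set δ : V → ℝ := Pi.single z 1
  have hδ : ∀ x, x ∉ D → δ x = 0 := fun x hx =>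
    Pi.single_eq_of_ne (ne_of_mem_of_not_mem hz hx).symm _
  have hsum : ∀ f : V → ℝ, ∑ x ∈ D, f x * δ x = f z := fun f => by
    rw [sum_eq_single_of_mem z hz fun x _ hx => by simp [δ, Pi.single_eq_of_ne hx]]
    simp [δ]
  have hEδ : energyForm G μ Q D w δ = (-lap G μ w z + Q z * w z) * deg G μ z := by
    simpa only [energyForm, mul_right_comm _ (δ _)] using hsum _
  have hsδ : ∀ t : ℝ,
      sqNorm G μ D (w + t • δ) = sqNorm G μ D w + (2 * t * w z + t ^ 2) * deg G μ z := by
    intro t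
    have hδz : δ z = 1 := Pi.single_eq_same _ _
    calc sqNorm G μ D (w + t • δ)
        = ∑ x ∈ D, (w x ^ 2 * deg G μ x + (2 * t * w x + t ^ 2 * δ x) * deg G μ x * δ x) :=
          sum_congr rfl fun x _ => by simp only [Pi.add_apply, Pi.smul_apply, smul_eq_mul]; ring
      _ = _ := by rw [sum_add_distrib, hsum, hδz, mul_one]; rfl
  -- first variation in the direction `δ`: a nonnegative quadratic in `t` vanishing at `0`
  -- has no linear term
  have hquad : ∀ t : ℝ, 0 ≤ (energyForm G μ Q D δ δ - lam * deg G μ z) * (t * t)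
      + 2 * ((-lap G μ w z + Q z * w z - lam * w z) * deg G μ z) * t + 0 := by
    intro t
    have h := hle (w + t • δ) fun x hx => by simp [hw x hx, hδ x hx]
    rw [energyForm_add_smul, energyForm_comm hsymm hd hδ hw, hEδ, hsδ] at h
    nlinarith
  have hb := discrim_le_zero hquad
  rw [discrim, mul_zero, sub_zero] at hb
  have hb0 := (pow_eq_zero_iff two_ne_zero).1 (le_antisymm hb (sq_nonneg _))
  have := (mul_eq_zero.1 ((mul_eq_zero.1 hb0).resolve_left two_ne_zero)).resolve_right (hd z).ne'
  linarith

end Variational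

section Perron

variable {G : SimpleGraph V} [G.LocallyFinite] {μ : V → V → ℝ} {Q : V → ℝ} {D : Finset V}

theorem exists_nonneg_eigenfunction (hsymm : ∀ x y, μ x y = μ y x)
    (hpos : ∀ x y, G.Adj x y → 0 < μ x y) (hd : ∀ x, 0 < deg G μ x) (hD : D.Nonempty) :
    ∃ w : V → ℝ, 0 ≤ w ∧ (∃ x ∈ D, w x ≠ 0) ∧ (∀ x, x ∉ D → w x = 0) ∧
      ∀ z ∈ D, -lap G μ w z + Q z * w z = lambda1 G μ Q D * w z := by
  classical
  obtain ⟨u₀, hsupp, hs, hE, hle⟩ := exists_lambda1_minimizer (Q := Q) hd hD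
  have habs : ∀ x, x ∉ D → |u₀| x = 0 := fun x hx => by simp [hsupp x hx]
  have hs' : sqNorm G μ D |u₀| = 1 := by simpa only [sqNorm, Pi.abs_apply, sq_abs] using hs
  have hE' : energyForm G μ Q D |u₀| |u₀| = lambda1 G μ Q D * sqNorm G μ D |u₀| :=
    le_antisymm (by rw [hs', mul_one, ← hE]; exact energyForm_abs_le hpos hd hsupp)
      (hle _ habs)
  exact ⟨|u₀|, abs_nonneg u₀, exists_ne_zero_of_sqNorm_ne_zero (hs' ▸ one_ne_zero), habs,
    fun z hz => eigen_eq_of_minimizer hsymm hd habs hle hE' hz⟩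

theorem lambda1Top_nonpos_of_isolated {v : V} (hv : ∀ y, ¬ G.Adj v y) :
    lambda1Top G μ Q ≤ 0 := by
  have hdeg : deg G μ v = 0 := by
    rw [deg, eq_empty_of_forall_notMem fun y hy => hv y ((G.mem_neighborFinset _ _).1 hy),
      sum_empty]
  -- every Rayleigh quotient on `{v}` is the junk value `r / 0 = 0`
  refine Real.sInf_nonpos' ⟨_, ⟨{v}, singleton_nonempty v, rfl⟩, Real.sInf_nonpos ?_⟩
  rintro r ⟨u, -, -, rfl⟩
  simp [hdeg]

end Perron

def graphBall (G : SimpleGraph V) [G.LocallyFinite] [DecidableEq V] (x₀ : V) : ℕ → Finset V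
  | 0 => {x₀}
  | j + 1 => graphBall G x₀ j ∪ (graphBall G x₀ j).biUnion fun x => G.neighborFinset x

section Balls

variable {G : SimpleGraph V} [G.LocallyFinite] [DecidableEq V] {μ : V → V → ℝ} {Q : V → ℝ}
  {x₀ : V}

theorem graphBall_subset_succ (j : ℕ) : graphBall G x₀ j ⊆ graphBall G x₀ (j + 1) :=
  subset_union_left

theorem graphBall_mono : Monotone (graphBall G x₀) :=
  monotone_nat_of_le_succ graphBall_subset_succ

theorem self_mem_graphBall (j : ℕ) : x₀ ∈ graphBall G x₀ j :=
  graphBall_mono (Nat.zero_le j) (mem_singleton_self x₀)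

theorem mem_graphBall_length {x : V} (p : G.Walk x x₀) : x ∈ graphBall G x₀ p.length := by
  induction p with
  | nil => exact mem_singleton_self _
  | cons hxy p ih =>
    exact mem_union_right _ (mem_biUnion.2 ⟨_, ih, (G.mem_neighborFinset _ _).2 hxy.symm⟩)

theorem exists_subset_graphBall (hconn : G.Connected) (x₀ : V) (D : Finset V) :
    ∃ j, D ⊆ graphBall G x₀ j := by
  have p : ∀ x, G.Walk x x₀ := fun x => (hconn.preconnected x x₀).some
  exact ⟨D.sup fun x => (p x).length, fun x hx =>
    graphBall_mono (le_sup (f := fun x => (p x).length) hx) (mem_graphBall_length (p x))⟩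

theorem exists_harnack_const (hpos : ∀ x y, G.Adj x y → 0 < μ x y) (x₀ : V) (j : ℕ) :
    ∀ x ∈ graphBall G x₀ j, ∃ C, 0 ≤ C ∧ ∀ (u : V → ℝ) (lam : ℝ), 0 ≤ u → 0 ≤ lam →
      (∀ y ∈ graphBall G x₀ j, -lap G μ u y + Q y * u y = lam * u y) →
      u x ≤ C * u x₀ ∧ u x₀ ≤ C * u x := by
  induction j with
  | zero =>
    intro x hx
    rw [graphBall, mem_singleton] at hx
    subst hx
    exact ⟨1, zero_le_one, fun u _ _ _ _ => by simp⟩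
  | succ j ih =>
    intro x hxj
    rcases mem_union.1 hxj with hx | hx
    · obtain ⟨C, hC, hH⟩ := ih x hx
      exact ⟨C, hC, fun u lam hu hlam heq =>
        hH u lam hu hlam fun y hy => heq y (graphBall_subset_succ j hy)⟩
    obtain ⟨y, hy, hyx⟩ := mem_biUnion.1 hx
    rw [G.mem_neighborFinset] at hyx
    obtain ⟨C, hC, hH⟩ := ih y hy
    set K := max ((1 + |Q y|) * deg G μ y / μ y x) ((1 + |Q x|) * deg G μ x / μ x y)
    have hK : 0 ≤ K := by
      have := hpos y x hyx
      have := deg_pos hpos hyx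
      exact le_max_of_le_left (by positivity)
    refine ⟨K * C, mul_nonneg hK hC, fun u lam hu hlam heq => ?_⟩
    obtain ⟨huy, hx₀⟩ := hH u lam hu hlam fun z hz => heq z (graphBall_subset_succ j hz)
    have hxy := le_mul_of_adj_of_eigen hpos hu hlam hyx (heq y (graphBall_subset_succ j hy))
    have hyx' := le_mul_of_adj_of_eigen hpos hu hlam hyx.symm (heq x hxj)
    constructor
    · calc u x ≤ K * u y := hxy.trans (mul_le_mul_of_nonneg_right (le_max_left _ _) (hu y))
        _ ≤ K * (C * u x₀) := mul_le_mul_of_nonneg_left huy hK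
        _ = K * C * u x₀ := by ring
    · calc u x₀ ≤ C * u y := hx₀
        _ ≤ C * (K * u x) := mul_le_mul_of_nonneg_left
          (hyx'.trans (mul_le_mul_of_nonneg_right (le_max_right _ _) (hu x))) hC
        _ = K * C * u x := by ring

end Balls

section Limit

variable {G : SimpleGraph V} [G.LocallyFinite] [DecidableEq V] {μ : V → V → ℝ} {Q : V → ℝ}
  {x₀ : V}

theorem exists_eigenfunction_graphBall_eq_one (hsymm : ∀ x y, μ x y = μ y x)
    (hpos : ∀ x y, G.Adj x y → 0 < μ x y) (hd : ∀ x, 0 < deg G μ x) {j : ℕ}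
    (hlam : 0 ≤ lambda1 G μ Q (graphBall G x₀ j)) :
    ∃ u : V → ℝ, 0 ≤ u ∧ u x₀ = 1 ∧ ∀ y ∈ graphBall G x₀ j,
      -lap G μ u y + Q y * u y = lambda1 G μ Q (graphBall G x₀ j) * u y := by
  obtain ⟨w, hw, ⟨p, hp, hwp⟩, -, heq⟩ :=
    exists_nonneg_eigenfunction (Q := Q) hsymm hpos hd ⟨x₀, self_mem_graphBall (G := G) j⟩
  obtain ⟨C, -, hC⟩ := exists_harnack_const hpos x₀ j p hp
  have hwx₀ : 0 < w x₀ := by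
    refine (hw x₀).lt_of_ne fun h => hwp (le_antisymm ?_ (hw p))
    simpa [← h] using (hC w _ hw hlam heq).1
  refine ⟨(w x₀)⁻¹ • w, smul_nonneg (inv_nonneg.2 hwx₀.le) hw, by simp [hwx₀.ne'],
    fun y hy => ?_⟩
  simp only [lap_smul, Pi.smul_apply, smul_eq_mul]
  linear_combination (w x₀)⁻¹ * heq y hy

theorem tendsto_lambda1_graphBall (hd : ∀ x, 0 < deg G μ x) (hconn : G.Connected)
    (hbdd : BddBelow {r : ℝ | ∃ D : Finset V, D.Nonempty ∧ r = lambda1 G μ Q D}) (x₀ : V) :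
    Tendsto (fun j => lambda1 G μ Q (graphBall G x₀ j)) atTop (𝓝 (lambda1Top G μ Q)) := by
  refine tendsto_atTop_isGLB (fun i j hij =>
    lambda1_antitone hd ⟨x₀, self_mem_graphBall i⟩ (graphBall_mono hij)) ⟨?_, fun b hb => ?_⟩
  · rintro _ ⟨j, rfl⟩
    exact csInf_le hbdd ⟨_, ⟨x₀, self_mem_graphBall j⟩, rfl⟩
  · refine le_csInf ⟨_, {x₀}, singleton_nonempty x₀, rfl⟩ ?_
    rintro _ ⟨D, hD, rfl⟩
    obtain ⟨j, hj⟩ := exists_subset_graphBall hconn x₀ D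
    exact (hb ⟨j, rfl⟩).trans (lambda1_antitone hd hD hj)

theorem exists_pos_eigenfunction_of_tendsto (hpos : ∀ x y, G.Adj x y → 0 < μ x y)
    (hconn : G.Connected) {u : ℕ → V → ℝ} {lam : ℕ → ℝ} {Λ : ℝ} (hu : ∀ j, 0 ≤ u j)
    (hu₀ : ∀ j, u j x₀ = 1) (hlam : ∀ j, 0 ≤ lam j)
    (heq : ∀ j, ∀ y ∈ graphBall G x₀ j, -lap G μ (u j) y + Q y * u j y = lam j * u j y)
    (hΛ : Tendsto lam atTop (𝓝 Λ)) :
    ∃ v : V → ℝ, (∀ x, 0 < v x) ∧ ∀ x, -lap G μ v x + Q x * v x = Λ * v x := by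
  have hball : ∀ x, ∀ᶠ j in atTop, x ∈ graphBall G x₀ j := fun x =>
    have ⟨j₀, hj₀⟩ := exists_subset_graphBall hconn x₀ {x}
    eventually_atTop.2 ⟨j₀, fun _ hj => graphBall_mono hj (hj₀ (mem_singleton_self x))⟩
  have hbound : ∀ x, ∃ C, ∀ᶠ j in atTop, u j x ∈ Set.Icc 0 C ∧ 1 ≤ C * u j x := by
    intro x
    obtain ⟨j₀, hj₀⟩ := eventually_atTop.1 (hball x)
    obtain ⟨C, -, hC⟩ := exists_harnack_const hpos x₀ j₀ x (hj₀ j₀ le_rfl)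
    refine ⟨C, eventually_atTop.2 ⟨j₀, fun j hj => ?_⟩⟩
    have := hC (u j) (lam j) (hu j) (hlam j) fun y hy => heq j y (graphBall_mono hj hy)
    rw [hu₀, mul_one] at this
    exact ⟨⟨hu j x, this.1⟩, this.2⟩
  choose C hC using hbound
  -- a limit along an ultrafilter replaces the diagonal extraction of a subsequence
  let U : Ultrafilter ℕ := Ultrafilter.of atTop
  have hU : (U : Filter ℕ) ≤ atTop := Ultrafilter.of_le atTop
  have hlim : ∀ x, ∃ a, Tendsto (fun j => u j x) U (𝓝 a) := fun x =>
    have ⟨a, _, ha⟩ := isCompact_Icc.ultrafilter_le_nhds (U.map fun j => u j x)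
      (le_principal_iff.2 (hU ((hC x).mono fun _ h => h.1)))
    ⟨a, ha⟩
  choose v hv using hlim
  refine ⟨v, fun x => ?_, fun x => ?_⟩
  · have h1 : 1 ≤ C x * v x :=
      ge_of_tendsto ((hv x).const_mul _) (hU ((hC x).mono fun _ h => h.2))
    have h0 : 0 ≤ v x := ge_of_tendsto (hv x) (Eventually.of_forall fun j => hu j x)
    exact h0.lt_of_ne fun h => by rw [← h, mul_zero] at h1; linarith
  · have hlap := ((continuous_lap (G := G) (μ := μ) x).tendsto v).comp (tendsto_pi_nhds.2 hv)
    refine tendsto_nhds_unique (((hlap.neg.add ((hv x).const_mul (Q x)))).congr' ?_)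
      ((hΛ.mono_left hU).mul (hv x))
    exact hU ((hball x).mono fun j hj => heq j x hj)

end Limit

theorem exists_principal_eigenfunction_general {V : Type*} (G : SimpleGraph V)
    [G.LocallyFinite]
    (μ : V → V → ℝ) (hsymm : ∀ x y, μ x y = μ y x)
    (hpos : ∀ x y, G.Adj x y → 0 < μ x y) (hconn : G.Connected)
    (Q : V → ℝ) (hl : 0 < lambda1Top G μ Q) :
    ∃ u : V → ℝ, (∀ x, 0 < u x) ∧
      ∀ x, -lap G μ u x + Q x * u x = lambda1Top G μ Q * u x := by
  classical
  obtain ⟨x₀⟩ := hconn.nonempty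
  have hd : ∀ x, 0 < deg G μ x := fun x =>
    have ⟨_, hxy⟩ : ∃ y, G.Adj x y :=
      not_forall_not.1 fun h => hl.not_ge (lambda1Top_nonpos_of_isolated h)
    deg_pos hpos hxy
  have hbdd : BddBelow {r : ℝ | ∃ D : Finset V, D.Nonempty ∧ r = lambda1 G μ Q D} :=
    not_not.1 fun h => hl.ne' (Real.sInf_of_not_bddBelow h)
  have hlam : ∀ j, 0 ≤ lambda1 G μ Q (graphBall G x₀ j) := fun j =>
    hl.le.trans (csInf_le hbdd ⟨_, ⟨x₀, self_mem_graphBall j⟩, rfl⟩)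
  choose u hu hu₀ heq using fun j => exists_eigenfunction_graphBall_eq_one hsymm hpos hd (hlam j)
  exact exists_pos_eigenfunction_of_tendsto hpos hconn hu hu₀ hlam heq
    (tendsto_lambda1_graphBall hd hconn hbdd x₀)

/-- Existence of a principal eigenfunction: if
`λ := λ₁(X, -Δ+Q) > 0`, then there is `u > 0` on `X` with `(-Δ+Q)u = λ u` on all
of `X`. -/
theorem exists_principal_eigenfunction {V : Type*} [Countable V] (G : SimpleGraph V)
    [G.LocallyFinite]
    (μ : V → V → ℝ) (hsymm : ∀ x y, μ x y = μ y x)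
    (hpos : ∀ x y, G.Adj x y → 0 < μ x y) (hconn : G.Connected)
    (Q : V → ℝ) (hl : 0 < lambda1Top G μ Q) :
    ∃ u : V → ℝ, (∀ x, 0 < u x) ∧
      ∀ x, -lap G μ u x + Q x * u x = lambda1Top G μ Q * u x :=
  exists_principal_eigenfunction_general G μ hsymm hpos hconn Q hl
end
end

section
/- (Existence of a global Green function under a vanishing superharmonic function) Fix x₀ ∈ X and let B(j) = { x ∈ X : d(x,x₀) < j }. Assume there exists a function φ : X → ℝ with φ > 0 on X, Δφ ≤ 0 on X, and φ(x) → 0 as d(x,x₀) → ∞. Then for all x ≠ y in X the limit G(x,y) = lim_{j→∞} G_j(x,y) of the Dirichlet Green functions G_j of B(j) exists and is finite, and G is a global Green function on X. -/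
open Finset Filter

noncomputable section

variable {V : Type*}

/-!
The comparison principle makes `G_j(·, y)` increase with `j` and gives
`G_j(·, y) ≤ G_j(y, y)` and `G_j(·, y) ≤ G_j(y, y) φ / φ(y)`. Pick a vertex `b` with
`φ(b) < φ(y) / 2`, so that `G_j(b, y) ≤ G_j(y, y) / 2`. The function
`w = G_j(y, y) - G_j(·, y)` is nonnegative with `Δw ≤ 1` on `B(j)`, and at each vertex `x`
this forces `(μ_{xz}/d_x) w(z) ≤ w(x) + 1` for every neighbour `z`. Following a fixed walk
from `y` to `b` gives `G_j(y, y) / 2 ≤ w(b) ≤ C` with `C` independent of `j`. So `G_j(x, y)`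
is increasing and bounded, and the equation `Δ_x G = -δ_y` passes to the limit because the
Laplacian is a finite sum.
-/

open Topology

variable {G : SimpleGraph V} {μ : V → V → ℝ}

lemma dist_le_of_mem_support [DecidableEq V] (hconn : G.Connected) (x₀ : V) {y b w : V}
    (q : G.Walk y b) (hw : w ∈ q.support) : G.dist w x₀ ≤ G.dist y x₀ + q.length := by
  have hyw : G.dist y w ≤ q.length :=
    (SimpleGraph.dist_le (q.takeUntil w hw)).trans (q.length_takeUntil_le_length hw)
  have := hconn.dist_triangle (u := w) (v := y) (w := x₀)
  rw [SimpleGraph.dist_comm] at hyw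
  omega

variable [G.LocallyFinite]

lemma finite_setOf_dist_lt (hconn : G.Connected) (x₀ : V) (n : ℕ) :
    {x : V | G.dist x x₀ < n}.Finite := by
  induction n with
  | zero => simp
  | succ n ih =>
    refine ((Set.finite_singleton x₀).union
      (ih.biUnion fun z _ => (G.neighborSet z).toFinite)).subset fun x hx => ?_
    by_cases hxx : x = x₀
    · exact Or.inl hxx
    obtain ⟨q, hq⟩ := (hconn x x₀).exists_walk_length_eq_dist
    cases q with
    | nil => exact absurd rfl hxx
    | @cons _ z _ h q =>
      rw [SimpleGraph.Walk.length_cons] at hq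
      have hz : G.dist z x₀ < n := by
        have := SimpleGraph.dist_le q
        simp only [Set.mem_ofPred_eq] at hx
        omega
      exact Or.inr (Set.mem_biUnion hz ((G.mem_neighborSet _ _).2 h.symm))

lemma exists_le_dist [Infinite V] (hconn : G.Connected) (x₀ : V) (n : ℕ) :
    ∃ b, n ≤ G.dist b x₀ := by
  obtain ⟨b, hb⟩ := (finite_setOf_dist_lt hconn x₀ n).infinite_compl.nonempty
  exact ⟨b, not_lt.1 hb⟩

section Laplacian

lemma lap_sub (u v : V → ℝ) (x : V) :
    lap G μ (fun z => u z - v z) x = lap G μ u x - lap G μ v x := by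
  unfold lap
  rw [← sum_sub_distrib]
  exact sum_congr rfl fun z _ => by ring

lemma lap_const_mul (c : ℝ) (u : V → ℝ) (x : V) :
    lap G μ (fun z => c * u z) x = c * lap G μ u x := by
  unfold lap
  rw [mul_sum]
  exact sum_congr rfl fun z _ => by ring

lemma lap_const (c : ℝ) (x : V) : lap G μ (fun _ => c) x = 0 := by
  simp [lap]

lemma deg_pos_of_adj (hpos : ∀ x y, G.Adj x y → 0 < μ x y) {x z : V} (hxz : G.Adj x z) :
    0 < deg G μ x :=
  sum_pos (fun w hw => hpos x w ((G.mem_neighborFinset x w).1 hw))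
    ⟨z, (G.mem_neighborFinset x z).2 hxz⟩

/-- The identity behind it is `∑_w (μ_{xw}/d_x) (v(w) - c) = Δv(x) + v(x) - c`. -/
lemma mul_sub_le_lap_add_sub (hpos : ∀ x y, G.Adj x y → 0 < μ x y) {v : V → ℝ} {c : ℝ}
    (hc : ∀ w, c ≤ v w) {x z : V} (hxz : G.Adj x z) :
    μ x z / deg G μ x * (v z - c) ≤ lap G μ v x + (v x - c) := by
  have hdeg := deg_pos_of_adj hpos hxz
  have hprob : ∑ w ∈ G.neighborFinset x, μ x w / deg G μ x = 1 := by
    rw [← sum_div]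
    exact div_self hdeg.ne'
  have hsum : ∑ w ∈ G.neighborFinset x, μ x w / deg G μ x * (v w - c)
      = lap G μ v x + (v x - c) := by
    rw [lap, ← one_mul (v x - c), ← hprob, sum_mul, ← sum_add_distrib]
    exact sum_congr rfl fun w _ => by ring
  rw [← hsum]
  refine single_le_sum (f := fun w => μ x w / deg G μ x * (v w - c)) (fun w hw => ?_)
    ((G.mem_neighborFinset x z).2 hxz)
  exact mul_nonneg (div_nonneg (hpos x w ((G.mem_neighborFinset x w).1 hw)).le hdeg.le)
    (sub_nonneg.2 (hc w))

lemma tendsto_lap {ι : Type*} {l : Filter ι} {u : ι → V → ℝ} {v : V → ℝ}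
    (h : ∀ z, Tendsto (fun i => u i z) l (𝓝 (v z))) (x : V) :
    Tendsto (fun i => lap G μ (u i) x) l (𝓝 (lap G μ v x)) :=
  tendsto_finsetSum _ fun z _ => ((h z).sub (h x)).const_mul _

end Laplacian

section MinimumPrinciple

variable (hpos : ∀ x y, G.Adj x y → 0 < μ x y) (hconn : G.Connected)
include hpos hconn

lemma eq_of_le_of_lap_nonpos {v : V → ℝ} {a : V} (hmin : ∀ z, v a ≤ v z)
    (hsuper : ∀ x, v x = v a → lap G μ v x ≤ 0) (x : V) : v x = v a := by
  have hstep : ∀ x z, v x = v a → G.Adj x z → v z = v a := by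
    intro x z hx hxz
    have h := mul_sub_le_lap_add_sub hpos hmin hxz
    rw [hx, sub_self, add_zero] at h
    have hp : 0 < μ x z / deg G μ x := div_pos (hpos x z hxz) (deg_pos_of_adj hpos hxz)
    nlinarith [hsuper x hx, hmin z]
  obtain ⟨q⟩ := hconn a x
  suffices ∀ {u w : V} (q : G.Walk u w), v u = v a → v w = v a from this q rfl
  intro u w q
  induction q with
  | nil => exact id
  | cons h _ ih => exact fun hu => ih (hstep _ _ hu h)

lemma nonneg_of_lap_nonpos [Infinite V] (S : Finset V) {v : V → ℝ}
    (hsuper : ∀ x ∈ S, lap G μ v x ≤ 0) (hout : ∀ x ∉ S, 0 ≤ v x) (x : V) : 0 ≤ v x := by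
  by_contra! hx
  have hxS : x ∈ S := by_contra fun h => (hout x h).not_gt hx
  obtain ⟨a, haS, ha⟩ := S.exists_min_image v ⟨x, hxS⟩
  have hva : v a < 0 := (ha x hxS).trans_lt hx
  have hmem : ∀ z, v z ≤ v a → z ∈ S := fun z hz =>
    by_contra fun h => ((hout z h).trans hz).not_gt hva
  have hconst := eq_of_le_of_lap_nonpos hpos hconn
    (fun z => (em (z ∈ S)).elim (ha z) fun hz => hva.le.trans (hout z hz))
    (fun z hz => hsuper z (hmem z hz.le))
  obtain ⟨w, hw⟩ := Infinite.exists_notMem_finset S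
  exact (hout w hw).not_gt (hconst w ▸ hva)

end MinimumPrinciple

lemma exists_add_one_le_mul_of_walk (hpos : ∀ x y, G.Adj x y → 0 < μ x y) {x b : V}
    (q : G.Walk x b) :
    ∃ C : ℝ, 0 < C ∧ ∀ v : V → ℝ, (∀ w, 0 ≤ v w) → (∀ w ∈ q.support, lap G μ v w ≤ 1) →
      v b + 1 ≤ C * (v x + 1) := by
  induction q with
  | nil => exact ⟨1, one_pos, fun v _ _ => (one_mul _).ge⟩
  | @cons x z b hxz q ih =>
    obtain ⟨C, hC, hCq⟩ := ih
    set p := μ x z / deg G μ x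
    have hp : 0 < p := div_pos (hpos x z hxz) (deg_pos_of_adj hpos hxz)
    refine ⟨C * (p⁻¹ + 1), by positivity, fun v hv hlap => ?_⟩
    have hstep : p * v z ≤ v x + 1 := by
      have h := mul_sub_le_lap_add_sub hpos hv hxz
      rw [sub_zero, sub_zero] at h
      linarith [hlap x (SimpleGraph.Walk.start_mem_support _)]
    have hz : v z ≤ p⁻¹ * (v x + 1) := by
      rw [← div_eq_inv_mul, le_div_iff₀' hp]
      exact hstep
    calc v b + 1 ≤ C * (v z + 1) :=
          hCq v hv fun w hw => hlap w (List.mem_cons_of_mem _ hw)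
      _ ≤ C * (p⁻¹ * (v x + 1) + (v x + 1)) := by gcongr; linarith [hv x]
      _ = C * (p⁻¹ + 1) * (v x + 1) := by ring

namespace IsDirichletGreenOnBall

variable [DecidableEq V] {x₀ : V} {j : ℕ} {H : V → V → ℝ}

lemma nonneg (hH : IsDirichletGreenOnBall G μ x₀ j H) (x y : V) : 0 ≤ H x y :=
  hH.1 x y

lemma lap_eq (hH : IsDirichletGreenOnBall G μ x₀ j H) {x y : V} (hy : G.dist y x₀ < j)
    (hx : G.dist x x₀ < j) : lap G μ (fun z => H z y) x = -(if x = y then 1 else 0) :=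
  (hH.2 y hy).1 x hx

lemma eq_zero (hH : IsDirichletGreenOnBall G μ x₀ j H) {x y : V} (hy : G.dist y x₀ < j)
    (hx : ¬ G.dist x x₀ < j) : H x y = 0 :=
  (hH.2 y hy).2 x hx

/-- On a finite graph no ball can carry a Dirichlet Green function once it is the whole
graph: `H(·, x₀)` would be superharmonic everywhere, hence constant. -/
lemma exists_le_dist_of_finite [Finite V] (hpos : ∀ x y, G.Adj x y → 0 < μ x y)
    (hconn : G.Connected) (hH : IsDirichletGreenOnBall G μ x₀ j H) :
    ∃ x, j ≤ G.dist x x₀ := by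
  by_contra! hball
  have : Nonempty V := ⟨x₀⟩
  obtain ⟨a, ha⟩ := Finite.exists_min fun z => H z x₀
  have hconst : (fun z => H z x₀) = fun _ => H a x₀ :=
    funext (eq_of_le_of_lap_nonpos hpos hconn ha fun x _ => by
      rw [hH.lap_eq (hball x₀) (hball x)]
      split_ifs <;> norm_num)
  have h := hH.lap_eq (hball x₀) (hball x₀)
  rw [hconst, lap_const, if_pos rfl] at h
  norm_num at h

variable [Infinite V] (hpos : ∀ x y, G.Adj x y → 0 < μ x y) (hconn : G.Connected)
include hpos hconn

lemma mono {k : ℕ} {H' : V → V → ℝ} (hH : IsDirichletGreenOnBall G μ x₀ j H)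
    (hH' : IsDirichletGreenOnBall G μ x₀ k H') (hjk : j ≤ k) {y : V} (hy : G.dist y x₀ < j)
    (x : V) : H x y ≤ H' x y := by
  have hball := finite_setOf_dist_lt hconn x₀ j
  refine sub_nonneg.1 (nonneg_of_lap_nonpos hpos hconn hball.toFinset
    (v := fun z => H' z y - H z y) (fun z hz => ?_) (fun z hz => ?_) x)
  · rw [Set.Finite.mem_toFinset, Set.mem_ofPred_eq] at hz
    rw [lap_sub, hH'.lap_eq (hy.trans_le hjk) (hz.trans_le hjk), hH.lap_eq hy hz, sub_self]
  · rw [Set.Finite.mem_toFinset, Set.mem_ofPred_eq] at hz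
    simpa [hH.eq_zero hy hz] using hH'.nonneg z y

lemma le_of_lap_nonpos (hH : IsDirichletGreenOnBall G μ x₀ j H) {y : V}
    (hy : G.dist y x₀ < j) {ψ : V → ℝ} (hψ : ∀ x, lap G μ ψ x ≤ 0) (hψ0 : ∀ x, 0 ≤ ψ x)
    (hψy : H y y ≤ ψ y) (x : V) : H x y ≤ ψ x := by
  have hball := finite_setOf_dist_lt hconn x₀ j
  refine sub_nonneg.1 (nonneg_of_lap_nonpos hpos hconn (hball.toFinset.erase y)
    (v := fun z => ψ z - H z y) (fun z hz => ?_) (fun z hz => ?_) x)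
  · rw [mem_erase, Set.Finite.mem_toFinset, Set.mem_ofPred_eq] at hz
    rw [lap_sub, hH.lap_eq hy hz.2, if_neg hz.1, neg_zero, sub_zero]
    exact hψ z
  · rw [mem_erase, Set.Finite.mem_toFinset, Set.mem_ofPred_eq, not_and_or, not_not] at hz
    rcases hz with rfl | hz
    · exact sub_nonneg.2 hψy
    · simpa [hH.eq_zero hy hz] using hψ0 z

lemma le_diag (hH : IsDirichletGreenOnBall G μ x₀ j H) {y : V} (hy : G.dist y x₀ < j)
    (x : V) : H x y ≤ H y y :=
  hH.le_of_lap_nonpos hpos hconn hy (fun _ => (lap_const _ _).le) (fun _ => hH.nonneg y y)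
    le_rfl x

end IsDirichletGreenOnBall

section GreenSequence

variable [DecidableEq V] {x₀ : V} {Gj : ℕ → V → V → ℝ}
  (hpos : ∀ x y, G.Adj x y → 0 < μ x y) (hconn : G.Connected)
  (hGj : ∀ j, IsDirichletGreenOnBall G μ x₀ j (Gj j))
include hpos hconn hGj

lemma infinite_of_isDirichletGreenOnBall : Infinite V := by
  by_contra hfin
  have : Finite V := not_infinite_iff_finite.1 hfin
  obtain ⟨N, hN⟩ := (Set.finite_range fun x => G.dist x x₀).bddAbove
  obtain ⟨x, hx⟩ := (hGj (N + 1)).exists_le_dist_of_finite hpos hconn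
  have : G.dist x x₀ ≤ N := hN ⟨x, rfl⟩
  omega

lemma exists_forall_le_of_vanishing_superharmonic [Infinite V] {φ : V → ℝ}
    (hφpos : ∀ x, 0 < φ x) (hφsuper : ∀ x, lap G μ φ x ≤ 0)
    (hφvanish : ∀ ε : ℝ, 0 < ε → ∃ N : ℕ, ∀ x, N ≤ G.dist x x₀ → φ x < ε) (y : V) :
    ∃ M : ℝ, ∀ j, G.dist y x₀ < j → ∀ x, Gj j x y ≤ M := by
  obtain ⟨N, hN⟩ := hφvanish (φ y / 2) (half_pos (hφpos y))
  obtain ⟨b, hb⟩ := exists_le_dist hconn x₀ N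
  obtain ⟨q⟩ := hconn y b
  obtain ⟨C, -, hC⟩ := exists_add_one_le_mul_of_walk hpos q
  set J := G.dist y x₀ + q.length + 1
  have hdiag : ∀ j, J ≤ j → Gj j y y ≤ 2 * C := by
    intro j hj
    have hy : G.dist y x₀ < j := by omega
    set Γ := Gj j y y
    have hwalk : Γ - Gj j b y + 1 ≤ C * (Γ - Γ + 1) := by
      refine hC (fun z => Γ - Gj j z y)
        (fun w => sub_nonneg.2 ((hGj j).le_diag hpos hconn hy w)) fun w hw => ?_
      have hw : G.dist w x₀ < j := by
        have := dist_le_of_mem_support hconn x₀ q hw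
        omega
      rw [lap_sub, lap_const, (hGj j).lap_eq hy hw]
      split_ifs <;> norm_num
    have hfar : Gj j b y ≤ Γ / 2 := by
      have hc : 0 ≤ Γ / φ y := div_nonneg ((hGj j).nonneg y y) (hφpos y).le
      calc Gj j b y ≤ Γ / φ y * φ b :=
            (hGj j).le_of_lap_nonpos hpos hconn hy
              (fun x => (lap_const_mul _ φ x).trans_le
                (mul_nonpos_of_nonneg_of_nonpos hc (hφsuper x)))
              (fun x => mul_nonneg hc (hφpos x).le)
              (by rw [div_mul_cancel₀ _ (hφpos y).ne']) b
        _ ≤ Γ / φ y * (φ y / 2) := by gcongr; exact (hN b hb).le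
        _ = Γ / 2 := by field_simp [(hφpos y).ne']
    linarith
  refine ⟨2 * C, fun j hj x => ?_⟩
  calc Gj j x y ≤ Gj (max j J) x y := (hGj j).mono hpos hconn (hGj _) (le_max_left _ _) hj x
    _ ≤ Gj (max j J) y y := (hGj _).le_diag hpos hconn (hj.trans_le (le_max_left _ _)) x
    _ ≤ 2 * C := hdiag _ (le_max_right _ _)

lemma exists_tendsto_of_forall_le [Infinite V] {y : V}
    (hbdd : ∃ M : ℝ, ∀ j, G.dist y x₀ < j → ∀ x, Gj j x y ≤ M) (x : V) :
    ∃ l, Tendsto (fun j => Gj j x y) atTop (𝓝 l) := by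
  obtain ⟨M, hM⟩ := hbdd
  set n := G.dist y x₀ + 1
  have hmono : Monotone fun k => Gj (k + n) x y := fun k k' hkk' =>
    (hGj _).mono hpos hconn (hGj _) (by omega) (by omega) x
  have hbddAbove : BddAbove (Set.range fun k => Gj (k + n) x y) :=
    ⟨M, by rintro _ ⟨k, rfl⟩; exact hM _ (by omega) x⟩
  exact ⟨_, (tendsto_add_atTop_iff_nat n).1 (tendsto_atTop_ciSup hmono hbddAbove)⟩

end GreenSequence

theorem green_exists_of_vanishing_superharmonic_general {V : Type*}
    [DecidableEq V] (G : SimpleGraph V) [G.LocallyFinite]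
    (μ : V → V → ℝ)
    (hpos : ∀ x y, G.Adj x y → 0 < μ x y) (hconn : G.Connected)
    (x₀ : V)
    (φ : V → ℝ) (hφpos : ∀ x, 0 < φ x) (hφsuper : ∀ x, lap G μ φ x ≤ 0)
    (hφvanish : ∀ ε : ℝ, 0 < ε → ∃ N : ℕ, ∀ x, N ≤ G.dist x x₀ → φ x < ε)
    (Gj : ℕ → V → V → ℝ)
    (hGj : ∀ j, IsDirichletGreenOnBall G μ x₀ j (Gj j)) :
    ∃ Ggl : V → V → ℝ,
      (∀ x y : V, x ≠ y → Tendsto (fun j => Gj j x y) atTop (nhds (Ggl x y))) ∧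
      (∀ x y, 0 ≤ Ggl x y) ∧
      (∀ y x, lap G μ (fun z => Ggl z y) x = -(if x = y then 1 else 0)) := by
  have := infinite_of_isDirichletGreenOnBall hpos hconn hGj
  choose Ggl hGgl using fun x y => exists_tendsto_of_forall_le hpos hconn hGj
    (exists_forall_le_of_vanishing_superharmonic hpos hconn hGj hφpos hφsuper hφvanish y) x
  refine ⟨Ggl, fun x y _ => hGgl x y,
    fun x y => ge_of_tendsto' (hGgl x y) fun j => (hGj j).nonneg x y, fun y x => ?_⟩
  have hlap : ∀ᶠ j in atTop, lap G μ (fun z => Gj j z y) x = -(if x = y then 1 else 0) :=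
    eventually_atTop.2 ⟨max (G.dist x x₀) (G.dist y x₀) + 1, fun j hj =>
      (hGj j).lap_eq (by omega) (by omega)⟩
  exact tendsto_nhds_unique (tendsto_lap (fun z => hGgl z y) x) (tendsto_const_nhds.congr'
    (hlap.mono fun _ h => h.symm))

/-- Existence of a global Green function under a vanishing
superharmonic function: if there is `φ > 0` with `Δφ ≤ 0` and `φ(x) → 0` as
`d(x,x₀) → ∞`, then the Dirichlet Green functions `G_j` of the balls
`B(j) = {x | d(x,x₀) < j}` converge pointwise (for `x ≠ y`) to a global Green
function `G` on `X`, i.e. `G ≥ 0` and `Δ_x G(x,y) = -δ_y(x)` for all `x, y`. -/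
theorem green_exists_of_vanishing_superharmonic {V : Type*} [Countable V]
    [DecidableEq V] (G : SimpleGraph V) [G.LocallyFinite]
    (μ : V → V → ℝ) (hsymm : ∀ x y, μ x y = μ y x)
    (hpos : ∀ x y, G.Adj x y → 0 < μ x y) (hconn : G.Connected)
    (x₀ : V)
    (φ : V → ℝ) (hφpos : ∀ x, 0 < φ x) (hφsuper : ∀ x, lap G μ φ x ≤ 0)
    (hφvanish : ∀ ε : ℝ, 0 < ε → ∃ N : ℕ, ∀ x, N ≤ G.dist x x₀ → φ x < ε)
    (Gj : ℕ → V → V → ℝ)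
    (hGj : ∀ j, IsDirichletGreenOnBall G μ x₀ j (Gj j)) :
    ∃ Ggl : V → V → ℝ,
      (∀ x y : V, x ≠ y → Tendsto (fun j => Gj j x y) atTop (nhds (Ggl x y))) ∧
      (∀ x y, 0 ≤ Ggl x y) ∧
      (∀ y x, lap G μ (fun z => Ggl z y) x = -(if x = y then 1 else 0)) :=
  green_exists_of_vanishing_superharmonic_general G μ hpos hconn x₀ φ hφpos hφsuper hφvanish Gj hGj
end
end
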